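/- Let X be a countable type, let π and ρ be strictly positive probability mass functions on X, and let I : X → ℕ be a function assigning to each state its energy-set index, with p_j = Σ_{x : I(x) = j} ρ(x) > 0 for every j in the range of I. Define the equi-energy jump transition matrix K by: for y ≠ x, K(x, y) = (ρ(y)/p_{I(x)}) · min(1, π(y)ρ(x)/(π(x)ρ(y))) if I(y) = I(x) and K(x, y) = 0 otherwise; and K(x, x) = 1 − Σ_{y ≠ x} K(x, y). Then K is a Markov transition matrix that is reversible with respect to π (π(x)K(x,y) = π(y)K(y,x) for all x, y), and consequently π is a stationary distribution of K: Σ_x π(x) K(x, y) = π(y) for every y. -/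

import Mathlib

/-!
Off the diagonal, `pd x * K x y` equals `min (pd x * rd y) (pd y * rd x) / p (I x)` when `x` and `y`
lie in the same energy set and `0` otherwise; both expressions are symmetric in `x` and `y`, which is
detailed balance. The rejection mass `K x x` is nonnegative because the off-diagonal row is dominated
by the proposal `rd y / p (I x)` restricted to the energy set of `x`, whose total mass is `1`.
Summing detailed balance over `x` and using that rows sum to `1` gives stationarity.
-/

open scoped Classical

/-- The idealized equi-energy jump kernel: from state `x`, propose `y` from the
auxiliary pmf `rd` conditioned on the energy set of `x` (probability
`rd(y)/p_{I(x)}` for `y` with `I(y) = I(x)`), accept with probability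
`min(1, pd(y) rd(x)/(pd(x) rd(y)))`, otherwise stay at `x`. -/
noncomputable def eeJumpKernel {X : Type*} (pd rd : X → ℝ) (I : X → ℕ) (p : ℕ → ℝ) :
    X → X → ℝ := fun x y =>
  if y = x then
    1 - ∑' z : X,
      (if I z = I x ∧ z ≠ x then rd z / p (I x) * min 1 (pd z * rd x / (pd x * rd z)) else 0)
  else
    if I y = I x then rd y / p (I x) * min 1 (pd y * rd x / (pd x * rd y)) else 0

theorem mul_min_one_div {α : Type*} [Field α] [LinearOrder α] [IsStrictOrderedRing α] {a : α}
    (b : α) (ha : 0 < a) : a * min 1 (b / a) = min a b := by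
  rw [mul_min_of_nonneg _ _ ha.le, mul_one, mul_div_cancel₀ _ ha.ne']

theorem tsum_mul_eq_of_detailed_balance {X : Type*} (π : X → ℝ) (K : X → X → ℝ)
    (hrow : ∀ x, ∑' y, K x y = 1) (hrev : ∀ x y, π x * K x y = π y * K y x) (y : X) :
    ∑' x, π x * K x y = π y := by
  rw [tsum_congr fun x => hrev x y, tsum_mul_left, hrow, mul_one]

section EquiEnergy

variable {X : Type*} (pd rd : X → ℝ) (I : X → ℕ) (p : ℕ → ℝ)

noncomputable def eeJumpOffDiag (x z : X) : ℝ :=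
  if I z = I x ∧ z ≠ x then rd z / p (I x) * min 1 (pd z * rd x / (pd x * rd z)) else 0

theorem eeJumpKernel_apply (x y : X) :
    eeJumpKernel pd rd I p x y =
      eeJumpOffDiag pd rd I p x y + if y = x then 1 - ∑' z, eeJumpOffDiag pd rd I p x z else 0 := by
  by_cases hyx : y = x
  · subst hyx
    simp [eeJumpKernel, eeJumpOffDiag]
  · by_cases hI : I y = I x <;> simp [eeJumpKernel, eeJumpOffDiag, hyx, hI]

variable {pd rd I p}

theorem eeJumpOffDiag_nonneg (hpd : ∀ x, 0 ≤ pd x) (hrd : ∀ x, 0 ≤ rd x) {x : X}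
    (hpx : 0 ≤ p (I x)) (z : X) : 0 ≤ eeJumpOffDiag pd rd I p x z := by
  unfold eeJumpOffDiag
  split_ifs
  · have hacc : 0 ≤ min 1 (pd z * rd x / (pd x * rd z)) :=
      le_min zero_le_one (by have := hpd x; have := hpd z; have := hrd x; have := hrd z; positivity)
    exact mul_nonneg (div_nonneg (hrd z) hpx) hacc
  · exact le_rfl

theorem eeJumpOffDiag_le_proposal (hrd : ∀ x, 0 ≤ rd x) {x : X} (hpx : 0 ≤ p (I x)) (z : X) :
    eeJumpOffDiag pd rd I p x z ≤ (if I z = I x then rd z else 0) / p (I x) := by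
  unfold eeJumpOffDiag
  by_cases h : I z = I x ∧ z ≠ x
  · rw [if_pos h, if_pos h.1]
    exact mul_le_of_le_one_right (div_nonneg (hrd z) hpx) (min_le_left _ _)
  · rw [if_neg h]
    split_ifs
    exacts [div_nonneg (hrd z) hpx, by rw [zero_div]]

theorem summable_energySet_proposal (hs : Summable rd) (x : X) :
    Summable fun z => (if I z = I x then rd z else 0) / p (I x) := by
  simpa [Set.indicator_apply] using (hs.indicator {z | I z = I x}).div_const (p (I x))

theorem summable_eeJumpOffDiag (hpd : ∀ x, 0 ≤ pd x) (hrd : ∀ x, 0 ≤ rd x) (hs : Summable rd)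
    {x : X} (hpx : 0 ≤ p (I x)) : Summable (eeJumpOffDiag pd rd I p x) :=
  (summable_energySet_proposal hs x).of_nonneg_of_le (eeJumpOffDiag_nonneg hpd hrd hpx)
    (eeJumpOffDiag_le_proposal hrd hpx)

theorem tsum_eeJumpOffDiag_le_one (hpd : ∀ x, 0 ≤ pd x) (hrd : ∀ x, 0 ≤ rd x) (hs : Summable rd)
    {x : X} (hp : p (I x) = ∑' z, if I z = I x then rd z else 0) (hpx : 0 < p (I x)) :
    ∑' z, eeJumpOffDiag pd rd I p x z ≤ 1 := by
  calc ∑' z, eeJumpOffDiag pd rd I p x z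
      ≤ ∑' z, (if I z = I x then rd z else 0) / p (I x) :=
        (summable_eeJumpOffDiag hpd hrd hs hpx.le).tsum_le_tsum
          (eeJumpOffDiag_le_proposal hrd hpx.le) (summable_energySet_proposal hs x)
    _ = 1 := by rw [tsum_div_const, ← hp, div_self hpx.ne']

theorem eeJumpKernel_nonneg (hpd : ∀ x, 0 ≤ pd x) (hrd : ∀ x, 0 ≤ rd x) (hs : Summable rd)
    {x : X} (hp : p (I x) = ∑' z, if I z = I x then rd z else 0) (hpx : 0 < p (I x)) (y : X) :
    0 ≤ eeJumpKernel pd rd I p x y := by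
  rw [eeJumpKernel_apply]
  have hrej : 0 ≤ 1 - ∑' z, eeJumpOffDiag pd rd I p x z :=
    sub_nonneg.2 (tsum_eeJumpOffDiag_le_one hpd hrd hs hp hpx)
  have hoff := eeJumpOffDiag_nonneg hpd hrd hpx.le y
  split_ifs <;> linarith

theorem tsum_eeJumpKernel (hpd : ∀ x, 0 ≤ pd x) (hrd : ∀ x, 0 ≤ rd x) (hs : Summable rd)
    {x : X} (hpx : 0 ≤ p (I x)) : ∑' y, eeJumpKernel pd rd I p x y = 1 := by
  simp_rw [eeJumpKernel_apply]
  rw [(summable_eeJumpOffDiag hpd hrd hs hpx).tsum_add (summable_of_ne_finset_zero (s := {x})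
    fun y hy => if_neg (by simpa using hy)), tsum_ite_eq]
  ring

theorem eeJumpKernel_detailed_balance (hpd : ∀ x, 0 < pd x) (hrd : ∀ x, 0 < rd x) (x y : X) :
    pd x * eeJumpKernel pd rd I p x y = pd y * eeJumpKernel pd rd I p y x := by
  by_cases hyx : y = x
  · rw [hyx]
  rw [eeJumpKernel_apply, eeJumpKernel_apply, if_neg hyx, if_neg (Ne.symm hyx), add_zero, add_zero]
  unfold eeJumpOffDiag
  by_cases hI : I y = I x
  · rw [if_pos ⟨hI, hyx⟩, if_pos ⟨hI.symm, Ne.symm hyx⟩, hI]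
    calc pd x * (rd y / p (I x) * min 1 (pd y * rd x / (pd x * rd y)))
        = pd x * rd y * min 1 (pd y * rd x / (pd x * rd y)) / p (I x) := by ring
      _ = pd y * rd x * min 1 (pd x * rd y / (pd y * rd x)) / p (I x) := by
        rw [mul_min_one_div _ (mul_pos (hpd x) (hrd y)),
          mul_min_one_div _ (mul_pos (hpd y) (hrd x)), min_comm]
      _ = pd y * (rd x / p (I x) * min 1 (pd x * rd y / (pd y * rd x))) := by ring
  · rw [if_neg fun h => hI h.1, if_neg fun h => hI h.1.symm, mul_zero, mul_zero]

end EquiEnergy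

theorem eeJumpKernel_markov_reversible_stationary_general
    {X : Type*} (pd rd : X → ℝ) (I : X → ℕ)
    (hpd : ∀ x, 0 < pd x) (hrd : ∀ x, 0 < rd x)
    (hrd1 : ∑' x, rd x = 1)
    (p : ℕ → ℝ) (hp : ∀ j, p j = ∑' x : X, (if I x = j then rd x else 0))
    (hppos : ∀ j, (∃ x, I x = j) → 0 < p j) :
    (∀ x y, 0 ≤ eeJumpKernel pd rd I p x y) ∧
    (∀ x, ∑' y, eeJumpKernel pd rd I p x y = 1) ∧
    (∀ x y, pd x * eeJumpKernel pd rd I p x y = pd y * eeJumpKernel pd rd I p y x) ∧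
    (∀ y, ∑' x, pd x * eeJumpKernel pd rd I p x y = pd y) := by
  have hs : Summable rd := by
    by_contra h
    simp [tsum_eq_zero_of_not_summable h] at hrd1
  have hpx : ∀ x, 0 < p (I x) := fun x => hppos _ ⟨x, rfl⟩
  have hpd0 : ∀ x, 0 ≤ pd x := fun x => (hpd x).le
  have hrd0 : ∀ x, 0 ≤ rd x := fun x => (hrd x).le
  have hrow : ∀ x, ∑' y, eeJumpKernel pd rd I p x y = 1 :=
    fun x => tsum_eeJumpKernel hpd0 hrd0 hs (hpx x).le
  have hrev := eeJumpKernel_detailed_balance (I := I) (p := p) hpd hrd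
  exact ⟨fun x => eeJumpKernel_nonneg hpd0 hrd0 hs (hp _) (hpx x), hrow, hrev,
    tsum_mul_eq_of_detailed_balance pd _ hrow hrev⟩

/-- On a countable state space, the equi-energy jump kernel `K` is a Markov
transition matrix, it is reversible with respect to the target pmf `pd`
(`pd(x)K(x,y) = pd(y)K(y,x)`), and consequently `pd` is a stationary
distribution of `K`. -/
theorem eeJumpKernel_markov_reversible_stationary
    {X : Type*} [Countable X] (pd rd : X → ℝ) (I : X → ℕ)
    (hpd : ∀ x, 0 < pd x) (hrd : ∀ x, 0 < rd x)
    (hpd1 : ∑' x, pd x = 1) (hrd1 : ∑' x, rd x = 1)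
    (p : ℕ → ℝ) (hp : ∀ j, p j = ∑' x : X, (if I x = j then rd x else 0))
    (hppos : ∀ j, (∃ x, I x = j) → 0 < p j) :
    (∀ x y, 0 ≤ eeJumpKernel pd rd I p x y) ∧
    (∀ x, ∑' y, eeJumpKernel pd rd I p x y = 1) ∧
    (∀ x y, pd x * eeJumpKernel pd rd I p x y = pd y * eeJumpKernel pd rd I p y x) ∧
    (∀ y, ∑' x, pd x * eeJumpKernel pd rd I p x y = pd y) :=
  eeJumpKernel_markov_reversible_stationary_general pd rd I hpd hrd hrd1 p hp hppos
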